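/- Let γ = (γ₁, γ₂) with γ₁ ≥ 0 and γ₂ − ϰ ≥ 0, ϰ ≥ 0, and define e_{γ,ϰ}(a,b) = C·e^{γ₁[a−b]}·max([a−b],1)^{γ₂}·min(⟨a⟩,⟨b⟩)^ϰ, where ⟨a⟩ = max(|a|,1). Then there exists a constant C (depending only on γ₂ and ϰ) such that e_{γ,ϰ}(a,b) ≤ e_{γ,0}(a,c)·e_{γ,ϰ}(c,b) for all a,b,c ∈ ℤ^d. -/

import Mathlib

/-!
Since `[·−·]` is a pseudometric and `⟨a⟩ ≤ ⟨c⟩ + [a−c]`, the exponential factor is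
submultiplicative by the triangle inequality. For the polynomial factor put `M = max([a−b],1)`,
`m = min(⟨a⟩,⟨b⟩)`, `Mᵢ` the analogous quantities for `(a,c)`, `(c,b)` and `m' = min(⟨c⟩,⟨b⟩)`.
Then `M ≤ 2 M₁M₂` and `M m ≤ 4 M₁M₂ m'`, and writing `M^γ₂ m^ϰ = M^(γ₂−ϰ) (M m)^ϰ` gives
the claim with `C = 2^(γ₂−ϰ) 4^ϰ`.
-/

open scoped BigOperators

/-- Euclidean norm on `ℤ^d`. -/
noncomputable def znorm {d : ℕ} (a : Fin d → ℤ) : ℝ :=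
  Real.sqrt (∑ i, ((a i : ℝ)) ^ 2)

/-- The pseudo-metric `[a−b] = min(|a−b|, |a+b|)` on `ℤ^d`. -/
noncomputable def pdist {d : ℕ} (a b : Fin d → ℤ) : ℝ :=
  min (znorm (a - b)) (znorm (a + b))

/-- `⟨a⟩ = max(|a|,1)`. -/
noncomputable def zbk {d : ℕ} (a : Fin d → ℤ) : ℝ := max (znorm a) 1

/-- The weight `e_{γ,ϰ}(a,b) = C e^{γ₁[a−b]} max([a−b],1)^{γ₂} min(⟨a⟩,⟨b⟩)^ϰ`. -/
noncomputable def eWeight {d : ℕ} (C γ₁ γ₂ ϰ : ℝ) (a b : Fin d → ℤ) : ℝ :=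
  C * Real.exp (γ₁ * pdist a b) * (max (pdist a b) 1) ^ γ₂ *
    (min (zbk a) (zbk b)) ^ ϰ

section MinNormSubAdd

variable {E : Type*} [SeminormedAddCommGroup E]

theorem norm_le_add_min_norm_sub_norm_add (x y : E) :
    ‖x‖ ≤ ‖y‖ + min ‖x - y‖ ‖x + y‖ := by
  rw [← min_add_add_left]
  refine le_min (norm_le_norm_add_norm_sub' x y) ?_
  simpa using norm_le_norm_add_norm_sub' x (-y)

theorem min_norm_sub_norm_add_triangle (x y z : E) :
    min ‖x - z‖ ‖x + z‖ ≤ min ‖x - y‖ ‖x + y‖ + min ‖y - z‖ ‖y + z‖ := by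
  rw [← min_add_add_right, ← min_add_add_left, ← min_add_add_left]
  refine le_min (le_min ?_ ?_) (le_min ?_ ?_)
  · exact min_le_of_left_le (norm_sub_le_norm_sub_add_norm_sub x y z)
  · exact min_le_of_right_le <|
      (congrArg norm (by abel : x + z = x - y + (y + z))).trans_le (norm_add_le _ _)
  · exact min_le_of_right_le <|
      (congrArg norm (by abel : x + z = x + y - (y - z))).trans_le (norm_sub_le _ _)
  · exact min_le_of_left_le <|
      (congrArg norm (by abel : x - z = x + y - (y + z))).trans_le (norm_sub_le _ _)

end MinNormSubAdd

section LatticeWeights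

variable {d : ℕ}

noncomputable def euclideanCast (a : Fin d → ℤ) : EuclideanSpace ℝ (Fin d) :=
  WithLp.toLp 2 fun i => (a i : ℝ)

theorem euclideanCast_add (a b : Fin d → ℤ) :
    euclideanCast (a + b) = euclideanCast a + euclideanCast b := by
  ext i; simp [euclideanCast]

theorem euclideanCast_sub (a b : Fin d → ℤ) :
    euclideanCast (a - b) = euclideanCast a - euclideanCast b := by
  ext i; simp [euclideanCast]

theorem znorm_eq_norm_euclideanCast (a : Fin d → ℤ) : znorm a = ‖euclideanCast a‖ := by
  simp [znorm, euclideanCast, EuclideanSpace.norm_eq]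

theorem pdist_eq (a b : Fin d → ℤ) :
    pdist a b = min ‖euclideanCast a - euclideanCast b‖ ‖euclideanCast a + euclideanCast b‖ := by
  rw [pdist, znorm_eq_norm_euclideanCast, znorm_eq_norm_euclideanCast, euclideanCast_sub,
    euclideanCast_add]

theorem pdist_nonneg (a b : Fin d → ℤ) : 0 ≤ pdist a b := by
  rw [pdist_eq]; positivity

theorem pdist_comm (a b : Fin d → ℤ) : pdist a b = pdist b a := by
  rw [pdist_eq, pdist_eq, norm_sub_rev, add_comm]

theorem pdist_triangle (a b c : Fin d → ℤ) : pdist a b ≤ pdist a c + pdist c b := by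
  simpa only [pdist_eq] using min_norm_sub_norm_add_triangle _ _ _

theorem one_le_zbk (a : Fin d → ℤ) : 1 ≤ zbk a := le_max_right _ _

theorem zbk_pos (a : Fin d → ℤ) : 0 < zbk a := zero_lt_one.trans_le (one_le_zbk a)

theorem zbk_le_zbk_add_pdist (a c : Fin d → ℤ) : zbk a ≤ zbk c + pdist a c := by
  have h := norm_le_add_min_norm_sub_norm_add (euclideanCast a) (euclideanCast c)
  rw [← znorm_eq_norm_euclideanCast, ← znorm_eq_norm_euclideanCast, ← pdist_eq] at h
  have := pdist_nonneg a c
  unfold zbk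
  exact max_le (h.trans (by gcongr; exact le_max_left _ _)) (by linarith [le_max_right (znorm c) 1])

theorem max_pdist_one_le_add (a b c : Fin d → ℤ) :
    max (pdist a b) 1 ≤ max (pdist a c) 1 + max (pdist c b) 1 :=
  max_le ((pdist_triangle a b c).trans (add_le_add (le_max_left _ _) (le_max_left _ _)))
    (by linarith [le_max_right (pdist a c) 1, le_max_right (pdist c b) 1])

theorem zbk_le_two_mul (a c : Fin d → ℤ) : zbk a ≤ 2 * (zbk c * max (pdist a c) 1) := by
  have := zbk_le_zbk_add_pdist a c
  nlinarith [one_le_zbk c, le_max_left (pdist a c) 1, le_max_right (pdist a c) 1]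

theorem max_pdist_one_le_two_mul (a b c : Fin d → ℤ) :
    max (pdist a b) 1 ≤ 2 * (max (pdist a c) 1 * max (pdist c b) 1) := by
  have := max_pdist_one_le_add a b c
  nlinarith [le_max_right (pdist a c) 1, le_max_right (pdist c b) 1]

/-- When `⟨c⟩ ≤ ⟨b⟩`, move the bracket to `c` across the shorter of the steps `a–c`, `c–b`;
the longer step alone bounds `max([a−b],1)` up to a factor `2`. -/
theorem max_pdist_one_mul_min_zbk_le (a b c : Fin d → ℤ) :
    max (pdist a b) 1 * min (zbk a) (zbk b) ≤
      4 * (max (pdist a c) 1 * max (pdist c b) 1) * min (zbk c) (zbk b) := by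
  have hM := max_pdist_one_le_add a b c
  have h1 := le_max_right (pdist a c) 1
  have h2 := le_max_right (pdist c b) 1
  have hmin_nonneg : 0 ≤ min (zbk a) (zbk b) := le_min (zbk_pos a).le (zbk_pos b).le
  rcases le_total (zbk b) (zbk c) with hbc | hcb
  · rw [min_eq_right hbc]
    calc max (pdist a b) 1 * min (zbk a) (zbk b)
        ≤ 2 * (max (pdist a c) 1 * max (pdist c b) 1) * zbk b :=
          mul_le_mul (max_pdist_one_le_two_mul a b c) (min_le_right _ _) hmin_nonneg
            (by positivity)
      _ ≤ 4 * (max (pdist a c) 1 * max (pdist c b) 1) * zbk b := by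
          gcongr
          · linarith [one_le_zbk b]
          · norm_num
  · rw [min_eq_left hcb]
    rcases le_total (max (pdist a c) 1) (max (pdist c b) 1) with h12 | h21
    · have := (min_le_left (zbk a) (zbk b)).trans (zbk_le_two_mul a c)
      nlinarith [one_le_zbk c]
    · have := (min_le_right (zbk a) (zbk b)).trans (zbk_le_two_mul b c)
      rw [pdist_comm] at this
      nlinarith [one_le_zbk c]

end LatticeWeights

theorem rpow_mul_rpow_le {γ ϰ M m P Q : ℝ} (hϰ : 0 ≤ ϰ) (hϰγ : ϰ ≤ γ) (hM : 0 < M) (hm : 0 ≤ m)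
    (hMP : M ≤ P) (hMQ : M * m ≤ Q) : M ^ γ * m ^ ϰ ≤ P ^ (γ - ϰ) * Q ^ ϰ := by
  have hsplit : M ^ γ * m ^ ϰ = M ^ (γ - ϰ) * (M * m) ^ ϰ := by
    rw [Real.mul_rpow hM.le hm, ← mul_assoc, ← Real.rpow_add hM, sub_add_cancel]
  rw [hsplit]
  exact mul_le_mul (Real.rpow_le_rpow hM.le hMP (by linarith))
    (Real.rpow_le_rpow (by positivity) hMQ hϰ) (by positivity)
    (Real.rpow_nonneg (hM.le.trans hMP) _)

theorem max_pdist_one_rpow_mul_min_zbk_rpow_le {d : ℕ} {γ ϰ : ℝ} (hϰ : 0 ≤ ϰ) (hϰγ : ϰ ≤ γ)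
    (a b c : Fin d → ℤ) :
    max (pdist a b) 1 ^ γ * min (zbk a) (zbk b) ^ ϰ ≤
      2 ^ (γ - ϰ) * 4 ^ ϰ *
        (max (pdist a c) 1 ^ γ * (max (pdist c b) 1 ^ γ * min (zbk c) (zbk b) ^ ϰ)) := by
  have hN : 0 < max (pdist a c) 1 * max (pdist c b) 1 := by positivity
  have hm : 0 ≤ min (zbk c) (zbk b) := le_min (zbk_pos c).le (zbk_pos b).le
  calc max (pdist a b) 1 ^ γ * min (zbk a) (zbk b) ^ ϰ
      ≤ (2 * (max (pdist a c) 1 * max (pdist c b) 1)) ^ (γ - ϰ) *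
          (4 * (max (pdist a c) 1 * max (pdist c b) 1) * min (zbk c) (zbk b)) ^ ϰ :=
        rpow_mul_rpow_le hϰ hϰγ (by positivity)
          (le_min (zbk_pos a).le (zbk_pos b).le)
          (max_pdist_one_le_two_mul a b c) (max_pdist_one_mul_min_zbk_le a b c)
    _ = 2 ^ (γ - ϰ) * 4 ^ ϰ *
          (max (pdist a c) 1 * max (pdist c b) 1) ^ (γ - ϰ + ϰ) * min (zbk c) (zbk b) ^ ϰ := by
        rw [Real.mul_rpow (by norm_num) hN.le, Real.mul_rpow (by positivity) hm,
          Real.mul_rpow (by norm_num) hN.le, Real.rpow_add hN]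
        ring
    _ = _ := by
        rw [sub_add_cancel, Real.mul_rpow (by positivity) (by positivity)]
        ring

/-- If `γ₁ ≥ 0` and `γ₂ − ϰ ≥ 0`, `ϰ ≥ 0`, then for a sufficiently large constant `C`
(depending only on `γ₂` and `ϰ`) one has `e_{γ,ϰ}(a,b) ≤ e_{γ,0}(a,c)·e_{γ,ϰ}(c,b)`
for all `a, b, c ∈ ℤ^d`. -/
theorem eWeight_submultiplicative (d : ℕ) (γ₁ γ₂ ϰ : ℝ)
    (hγ₁ : 0 ≤ γ₁) (hϰ : 0 ≤ ϰ) (hγ₂ϰ : 0 ≤ γ₂ - ϰ) :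
    ∃ C : ℝ, 1 ≤ C ∧ ∀ a b c : Fin d → ℤ,
      eWeight C γ₁ γ₂ ϰ a b ≤ eWeight C γ₁ γ₂ 0 a c * eWeight C γ₁ γ₂ ϰ c b := by
  refine ⟨2 ^ (γ₂ - ϰ) * 4 ^ ϰ, one_le_mul_of_one_le_of_one_le
    (Real.one_le_rpow (by norm_num) hγ₂ϰ) (Real.one_le_rpow (by norm_num) hϰ), fun a b c => ?_⟩
  have hexp : Real.exp (γ₁ * pdist a b) ≤
      Real.exp (γ₁ * pdist a c) * Real.exp (γ₁ * pdist c b) := by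
    rw [← Real.exp_add, ← mul_add]
    gcongr
    exact pdist_triangle a b c
  have hpoly := max_pdist_one_rpow_mul_min_zbk_rpow_le hϰ (sub_nonneg.mp hγ₂ϰ) a b c
  have hm : 0 ≤ min (zbk a) (zbk b) := le_min (zbk_pos a).le (zbk_pos b).le
  calc eWeight (2 ^ (γ₂ - ϰ) * 4 ^ ϰ) γ₁ γ₂ ϰ a b
      = 2 ^ (γ₂ - ϰ) * 4 ^ ϰ *
          (Real.exp (γ₁ * pdist a b) * (max (pdist a b) 1 ^ γ₂ * min (zbk a) (zbk b) ^ ϰ)) := by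
        rw [eWeight]; ring
    _ ≤ 2 ^ (γ₂ - ϰ) * 4 ^ ϰ * ((Real.exp (γ₁ * pdist a c) * Real.exp (γ₁ * pdist c b)) *
          (2 ^ (γ₂ - ϰ) * 4 ^ ϰ * (max (pdist a c) 1 ^ γ₂ *
            (max (pdist c b) 1 ^ γ₂ * min (zbk c) (zbk b) ^ ϰ)))) := by
        gcongr
    _ = _ := by rw [eWeight, eWeight, Real.rpow_zero, mul_one]; ring
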